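/- arXiv:2512.09933 — 12 statements merged into one kernel-verified Lean document; each statement's English description precedes it below -/
import Mathlib

section
/- Let β > 0 with β ≠ 1, and let (a_k)_{k≥0} be a sequence of nonnegative real numbers with a_0 ≤ 1 and a_k ≤ 1 − a_0² for all k ≥ 1. Then for every r ∈ (0,1) satisfying 3(1−(1−r)^{1−β})/(1−β) ≥ 2((1−r)^{−β} − 1)/β, one has Σ_{k=0}^∞ r^k · (1/(k+1)) · Σ_{n=0}^k (Γ(k−n+β)/(Γ(k−n+1)Γ(β))) · a_n ≤ (1/r) · (1−(1−r)^{1−β})/(1−β). -/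
/-!
Write `c_β(j) = Γ(j+β)/(Γ(j+1)Γ(β))`, which is `Ring.multichoose β j`. Since `c_β ≥ 0` and
`∑_{j ≤ k} c_β(j) = c_{β+1}(k)`, the hypotheses bound the `k`-th Cesàro coefficient by
`(a₀ c_β(k) + (1 - a₀²)(c_{β+1}(k) - c_β(k)))/(k+1)`. The identity `(k+1) c_α(k+1) = α c_{α+1}(k)`
turns the binomial series `∑ c_α(j) rʲ = (1-r)^(-α)` into
`∑ rᵏ c_{α+1}(k)/(k+1) = ((1-r)^(-α) - 1)/(α r)`. Calling `A` and `A'` these sums for `α = β-1`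
and `α = β`, the series is at most `a₀ A + (1-a₀²)(A' - A)`; the condition on `r` says
`2A' ≤ 3A`, so this is at most `A - A (1-a₀)²/2 ≤ A`.
-/

open Real Finset Polynomial
open scoped Nat

namespace Ring

theorem sum_range_multichoose {R : Type*} [NonAssocSemiring R] [Pow R ℕ] [NatPowAssoc R]
    [BinomialRing R] (r : R) (k : ℕ) :
    ∑ j ∈ range (k + 1), multichoose r j = multichoose (r + 1) k := by
  induction k with
  | zero => simp
  | succ k ih => rw [sum_range_succ, ih, multichoose_succ_succ, add_comm]

section Field

variable {K : Type*} [Field K] [CharZero K]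

theorem multichoose_eq_ascPochhammer_eval_div (r : K) (n : ℕ) :
    multichoose r n = (ascPochhammer K n).eval r / n ! := by
  rw [eq_div_iff (Nat.cast_ne_zero.mpr n.factorial_ne_zero), mul_comm, ← nsmul_eq_mul,
    factorial_nsmul_multichoose_eq_ascPochhammer, ascPochhammer_smeval_eq_eval]

theorem succ_mul_multichoose_succ (r : K) (k : ℕ) :
    ((k : K) + 1) * multichoose r (k + 1) = r * multichoose (r + 1) k := by
  rw [multichoose_eq_ascPochhammer_eval_div, multichoose_eq_ascPochhammer_eval_div,
    ascPochhammer_succ_left, eval_mul, eval_X, eval_comp, eval_add, eval_X, eval_one,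
    Nat.factorial_succ, Nat.cast_mul]
  field_simp
  push_cast
  ring

end Field

theorem multichoose_pos {K : Type*} [Field K] [LinearOrder K] [IsStrictOrderedRing K]
    {r : K} (hr : 0 < r) (n : ℕ) : 0 < multichoose r n := by
  rw [multichoose_eq_ascPochhammer_eval_div]
  exact div_pos (ascPochhammer_pos n r hr) (by positivity)

end Ring

namespace Real

theorem Gamma_add_nat_eq_ascPochhammer_mul {s : ℝ} (hs : ∀ m : ℕ, s ≠ -m) (n : ℕ) :
    Gamma (s + n) = (ascPochhammer ℝ n).eval s * Gamma s := by
  induction n with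
  | zero => simp
  | succ n ih =>
    have hsn : s + n ≠ 0 := fun h => hs n (by linarith)
    rw [Nat.cast_succ, ← add_assoc, Gamma_add_one hsn, ih, ascPochhammer_succ_eval]
    ring

theorem Gamma_nat_add_div_eq_multichoose {s : ℝ} (hs : ∀ m : ℕ, s ≠ -m) (n : ℕ) :
    Gamma (n + s) / (Gamma (n + 1) * Gamma s) = Ring.multichoose s n := by
  rw [add_comm, Gamma_add_nat_eq_ascPochhammer_mul hs, Gamma_nat_eq_factorial,
    Ring.multichoose_eq_ascPochhammer_eval_div]
  field_simp [Gamma_ne_zero hs]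

theorem hasSum_multichoose_mul_pow (a : ℝ) {x : ℝ} (hx : |x| < 1) :
    HasSum (fun n => Ring.multichoose a n * x ^ n) ((1 - x) ^ (-a)) := by
  have h := (one_div_one_sub_rpow_hasFPowerSeriesOnBall_zero a).hasSum (y := x)
    (by simpa [enorm_eq_nnnorm, ← NNReal.coe_lt_coe] using hx)
  have hx1 : 0 ≤ 1 - x := by linarith [le_abs_self x]
  simpa [FormalMultilinearSeries.ofScalars_apply_eq, ← Ring.multichoose_eq, rpow_neg hx1,
    mul_comm] using h

theorem hasSum_pow_mul_multichoose_succ_div {a : ℝ} (ha : a ≠ 0) {r : ℝ} (hr0 : r ≠ 0)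
    (hr : |r| < 1) :
    HasSum (fun k : ℕ => r ^ k * (Ring.multichoose (a + 1) k / (k + 1)))
      (1 / r * (((1 - r) ^ (-a) - 1) / a)) := by
  have h := (hasSum_nat_add_iff' 1).mpr (hasSum_multichoose_mul_pow a hr)
  simp only [range_one, sum_singleton, Ring.multichoose_zero_right, pow_zero, mul_one] at h
  rw [show 1 / r * (((1 - r) ^ (-a) - 1) / a) = 1 / (r * a) * ((1 - r) ^ (-a) - 1) by
    field_simp]
  refine (h.mul_left _).congr_fun fun k => ?_
  have hk := Ring.succ_mul_multichoose_succ a k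
  field_simp
  linear_combination -r ^ (k + 1) * hk

end Real

theorem sum_range_sub_mul_le {c a : ℕ → ℝ} (hc : ∀ j, 0 ≤ c j) {q : ℝ}
    (ha : ∀ n, 1 ≤ n → a n ≤ q) (k : ℕ) :
    ∑ n ∈ range (k + 1), c (k - n) * a n ≤ c k * a 0 + q * ∑ j ∈ range k, c j := by
  rw [sum_range_succ', Nat.sub_zero, add_comm, ← sum_range_reflect c k, mul_sum]
  gcongr c k * a 0 + ?_
  refine sum_le_sum fun i hi => ?_
  rw [mem_range] at hi
  rw [show k - (i + 1) = k - 1 - i by omega, mul_comm q]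
  exact mul_le_mul_of_nonneg_left (ha _ (by omega)) (hc _)

/-- The `k`-th Taylor coefficient of the β-Cesàro transform of `∑ aₙ zⁿ`. -/
noncomputable def cesaroCoeff (β : ℝ) (a : ℕ → ℝ) (k : ℕ) : ℝ :=
  1 / (k + 1 : ℝ) * ∑ n ∈ range (k + 1), Ring.multichoose β (k - n) * a n

theorem cesaroCoeff_nonneg {β : ℝ} (hβ : 0 < β) {a : ℕ → ℝ} (ha : ∀ n, 0 ≤ a n) (k : ℕ) :
    0 ≤ cesaroCoeff β a k :=
  mul_nonneg (by positivity)
    (sum_nonneg fun n _ => mul_nonneg (Ring.multichoose_pos hβ _).le (ha n))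

theorem cesaroCoeff_le {β : ℝ} (hβ : 0 < β) {a : ℕ → ℝ} {q : ℝ} (ha : ∀ n, 1 ≤ n → a n ≤ q)
    (k : ℕ) :
    cesaroCoeff β a k ≤ 1 / (k + 1 : ℝ) *
      (a 0 * Ring.multichoose β k + q * (Ring.multichoose (β + 1) k - Ring.multichoose β k)) := by
  have hsum : ∑ j ∈ range k, Ring.multichoose β j =
      Ring.multichoose (β + 1) k - Ring.multichoose β k := by
    rw [← Ring.sum_range_multichoose, sum_range_succ, add_sub_cancel_right]
  unfold cesaroCoeff
  gcongr
  rw [mul_comm (a 0), ← hsum]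
  exact sum_range_sub_mul_le (fun j => (Ring.multichoose_pos hβ j).le) ha k

theorem tsum_pow_mul_cesaroCoeff_le {β : ℝ} (hβ : 0 < β) {a : ℕ → ℝ} (ha : ∀ n, 0 ≤ a n)
    {q : ℝ} (hq : ∀ n, 1 ≤ n → a n ≤ q) {r : ℝ} (hr : 0 ≤ r) {A A' : ℝ}
    (hA : HasSum (fun k : ℕ => r ^ k * (Ring.multichoose β k / (k + 1))) A)
    (hA' : HasSum (fun k : ℕ => r ^ k * (Ring.multichoose (β + 1) k / (k + 1))) A') :
    ∑' k, r ^ k * cesaroCoeff β a k ≤ a 0 * A + q * (A' - A) := by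
  have hdom : HasSum (fun k : ℕ => r ^ k * (1 / (k + 1 : ℝ) * (a 0 * Ring.multichoose β k +
      q * (Ring.multichoose (β + 1) k - Ring.multichoose β k))))
      (a 0 * A + q * (A' - A)) :=
    ((hA.mul_left (a 0)).add ((hA'.sub hA).mul_left q)).congr_fun fun k => by ring
  have hle (k : ℕ) := mul_le_mul_of_nonneg_left (cesaroCoeff_le hβ hq k) (pow_nonneg hr k)
  have hterm_nonneg (k : ℕ) : 0 ≤ r ^ k * cesaroCoeff β a k :=
    mul_nonneg (pow_nonneg hr k) (cesaroCoeff_nonneg hβ ha k)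
  exact hasSum_le hle (Summable.of_nonneg_of_le hterm_nonneg hle hdom.summable).hasSum hdom

theorem cesaro_bohr_beta_general (β : ℝ) (hβ : 0 < β) (hβ1 : β ≠ 1) (a : ℕ → ℝ)
    (ha : ∀ k, 0 ≤ a k) (hak : ∀ k, 1 ≤ k → a k ≤ 1 - (a 0) ^ 2)
    (r : ℝ) (hr : r ∈ Set.Ioo (0 : ℝ) 1)
    (hR : 2 * ((1 - r) ^ (-β) - 1) / β ≤ 3 * (1 - (1 - r) ^ (1 - β)) / (1 - β)) :
    ∑' k : ℕ, r ^ k * ((1 / (k + 1 : ℝ)) *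
        ∑ n ∈ Finset.range (k + 1),
          Real.Gamma (((k - n : ℕ) : ℝ) + β) /
            (Real.Gamma (((k - n : ℕ) : ℝ) + 1) * Real.Gamma β) * a n)
      ≤ (1 / r) * ((1 - (1 - r) ^ (1 - β)) / (1 - β)) := by
  obtain ⟨hr0, hr1⟩ := hr
  have hr : |r| < 1 := by rwa [abs_of_pos hr0]
  have hβnat (m : ℕ) : β ≠ -m := ((neg_nonpos.2 m.cast_nonneg).trans_lt hβ).ne'
  simp only [Gamma_nat_add_div_eq_multichoose hβnat]
  set p := a 0
  set A := 1 / r * ((1 - (1 - r) ^ (1 - β)) / (1 - β))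
  set A' := 1 / r * (((1 - r) ^ (-β) - 1) / β)
  have hA : HasSum (fun k : ℕ => r ^ k * (Ring.multichoose β k / (k + 1))) A := by
    have h := hasSum_pow_mul_multichoose_succ_div (sub_ne_zero.mpr hβ1) hr0.ne' hr
    rwa [sub_add_cancel, neg_sub, ← neg_sub 1 β, div_neg, ← neg_div, neg_sub] at h
  have hA' : HasSum (fun k : ℕ => r ^ k * (Ring.multichoose (β + 1) k / (k + 1))) A' :=
    hasSum_pow_mul_multichoose_succ_div hβ.ne' hr0.ne' hr
  have hA_nonneg : 0 ≤ A := hA.nonneg fun k => by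
    have := Ring.multichoose_pos hβ k
    positivity
  have h2A' : 2 * A' ≤ 3 * A := by linear_combination (1 / r) * hR
  have hp : 0 ≤ 1 - p ^ 2 := (ha 1).trans (hak 1 le_rfl)
  calc _ = ∑' k : ℕ, r ^ k * cesaroCoeff β a k := rfl
    _ ≤ p * A + (1 - p ^ 2) * (A' - A) := tsum_pow_mul_cesaroCoeff_le hβ ha hak hr0.le hA hA'
    _ ≤ A := by
      nlinarith [mul_le_mul_of_nonneg_left h2A' hp, mul_nonneg hA_nonneg (sq_nonneg (1 - p))]

/-- Bohr-type inequality for the β-Cesàro operator (real coefficient form of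
Theorem 2.1). -/
theorem cesaro_bohr_beta (β : ℝ) (hβ : 0 < β) (hβ1 : β ≠ 1) (a : ℕ → ℝ)
    (ha : ∀ k, 0 ≤ a k) (ha0 : a 0 ≤ 1) (hak : ∀ k, 1 ≤ k → a k ≤ 1 - (a 0) ^ 2)
    (r : ℝ) (hr : r ∈ Set.Ioo (0 : ℝ) 1)
    (hR : 2 * ((1 - r) ^ (-β) - 1) / β ≤ 3 * (1 - (1 - r) ^ (1 - β)) / (1 - β)) :
    ∑' k : ℕ, r ^ k * ((1 / (k + 1 : ℝ)) *
        ∑ n ∈ Finset.range (k + 1),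
          Real.Gamma (((k - n : ℕ) : ℝ) + β) /
            (Real.Gamma (((k - n : ℕ) : ℝ) + 1) * Real.Gamma β) * a n)
      ≤ (1 / r) * ((1 - (1 - r) ^ (1 - β)) / (1 - β)) :=
  cesaro_bohr_beta_general β hβ hβ1 a ha hak r hr hR
end

section
/- Let (a_k)_{k≥1} be a sequence of nonnegative real numbers with a_1 ≤ 1 and a_k ≤ 1 − a_1² for all k ≥ 2. Then for every r ∈ (0,1) satisfying 3(1−r)·log(1/(1−r)) ≥ 2r, one has Σ_{k=0}^∞ r^{k+1} · (1/(k+1)) · Σ_{n=0}^k a_{n+1} ≤ log(1/(1−r)). -/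
/-!
Bound the Cesàro means termwise: the partial sum `a 1 + ⋯ + a (k+1)` is at most
`a 1 + k (1 - a 1 ^ 2)`, so the series is dominated by `A L + (1 - A²) X` with `A = a 1`,
`L = ∑ rᵏ⁺¹/(k+1) = -log (1 - r)` and `X = ∑ rᵏ⁺¹ k/(k+1) = r/(1-r) - L ≥ 0`.
The radius condition says exactly `2 X ≤ L`, and then
`L - A L - (1 - A²) X = (1 - A)(L - 2X) + (1 - A)² X ≥ 0`.
-/

open Real Finset

lemma sum_range_succ_shift_le_of_le {a : ℕ → ℝ} {b : ℝ} (hab : ∀ k, 2 ≤ k → a k ≤ b) (k : ℕ) :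
    ∑ n ∈ range (k + 1), a (n + 1) ≤ a 1 + k * b := by
  induction k with
  | zero => simp
  | succ k ih =>
    rw [sum_range_succ]
    push_cast
    linarith [hab (k + 1 + 1) (by omega)]

lemma cesaro_mean_le_of_le {a : ℕ → ℝ} {b : ℝ} (hab : ∀ k, 2 ≤ k → a k ≤ b) (k : ℕ) :
    1 / (k + 1 : ℝ) * ∑ n ∈ range (k + 1), a (n + 1) ≤
      1 / (k + 1 : ℝ) * a 1 + k / (k + 1 : ℝ) * b := by
  calc 1 / (k + 1 : ℝ) * ∑ n ∈ range (k + 1), a (n + 1)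
      ≤ 1 / (k + 1 : ℝ) * (a 1 + k * b) := by
        gcongr; exact sum_range_succ_shift_le_of_le hab k
    _ = 1 / (k + 1 : ℝ) * a 1 + k / (k + 1 : ℝ) * b := by ring

lemma hasSum_pow_succ_mul_div_succ {r : ℝ} (hr : |r| < 1) :
    HasSum (fun k : ℕ ↦ r ^ (k + 1) * (k / (k + 1 : ℝ))) (r / (1 - r) + log (1 - r)) := by
  have hgeo : HasSum (fun k : ℕ ↦ r ^ (k + 1)) (r / (1 - r)) := by
    simpa [pow_succ', div_eq_mul_inv] using (hasSum_geometric_of_abs_lt_one hr).mul_left r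
  have h := hgeo.sub (hasSum_pow_div_log_of_abs_lt_one hr)
  rw [sub_neg_eq_add] at h
  refine h.congr_fun fun k ↦ ?_
  field_simp
  ring

lemma hasSum_cesaro_majorant {r : ℝ} (hr : |r| < 1) (c b : ℝ) :
    HasSum (fun k : ℕ ↦ r ^ (k + 1) * (1 / (k + 1 : ℝ) * c + k / (k + 1 : ℝ) * b))
      (-log (1 - r) * c + (r / (1 - r) + log (1 - r)) * b) :=
  (((hasSum_pow_div_log_of_abs_lt_one hr).mul_right c).add
    ((hasSum_pow_succ_mul_div_succ hr).mul_right b)).congr_fun fun k ↦ by ring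

lemma two_mul_le_neg_log_of_radius {r : ℝ} (hr : r < 1)
    (hR : 2 * r ≤ 3 * (1 - r) * log (1 / (1 - r))) :
    2 * (r / (1 - r) + log (1 - r)) ≤ -log (1 - r) := by
  have h1r : 0 < 1 - r := by linarith
  rw [one_div, log_inv] at hR
  have : r / (1 - r) ≤ 3 / 2 * -log (1 - r) := by rw [div_le_iff₀ h1r]; linarith
  linarith

lemma mul_add_mul_one_sub_sq_le {c x L : ℝ} (hc : c ≤ 1) (hx : 0 ≤ x) (h : 2 * x ≤ L) :
    L * c + x * (1 - c ^ 2) ≤ L := by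
  nlinarith [mul_nonneg (sub_nonneg.2 hc) (sub_nonneg.2 h),
    mul_nonneg (mul_nonneg (sub_nonneg.2 hc) (sub_nonneg.2 hc)) hx]

theorem cesaro_bohr_normalized_general (a : ℕ → ℝ) (ha1 : a 1 ≤ 1)
    (hak : ∀ k, 2 ≤ k → a k ≤ 1 - (a 1) ^ 2)
    (r : ℝ) (hr : r ∈ Set.Ioo (0 : ℝ) 1)
    (hR : 2 * r ≤ 3 * (1 - r) * Real.log (1 / (1 - r))) :
    ∑' k : ℕ, r ^ (k + 1) * ((1 / (k + 1 : ℝ)) *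
        ∑ n ∈ Finset.range (k + 1), a (n + 1))
      ≤ Real.log (1 / (1 - r)) := by
  obtain ⟨hr0, hr1⟩ := hr
  have habs : |r| < 1 := by rwa [abs_of_pos hr0]
  have hL : 0 ≤ -log (1 - r) := neg_nonneg.2 (log_nonpos (by linarith) (by linarith))
  have hX : 0 ≤ r / (1 - r) + log (1 - r) :=
    (hasSum_pow_succ_mul_div_succ habs).nonneg fun k ↦ by positivity
  have hmaj := hasSum_cesaro_majorant habs (a 1) (1 - a 1 ^ 2)
  have hbound := mul_add_mul_one_sub_sq_le ha1 hX (two_mul_le_neg_log_of_radius hr1 hR)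
  rw [one_div, log_inv]
  by_cases hsum : Summable fun k : ℕ ↦
      r ^ (k + 1) * ((1 / (k + 1 : ℝ)) * ∑ n ∈ range (k + 1), a (n + 1))
  · refine le_trans ?_ hbound
    rw [← hmaj.tsum_eq]
    exact hsum.tsum_le_tsum (fun k ↦ mul_le_mul_of_nonneg_left
      (cesaro_mean_le_of_le hak k) (by positivity)) hmaj.summable
  · rwa [tsum_eq_zero_of_not_summable hsum]

/-- Bohr-type inequality for the Cesàro operator applied to functions
vanishing at the origin (β → 1 case of the remark following Theorem 2.1). -/
theorem cesaro_bohr_normalized (a : ℕ → ℝ) (ha : ∀ k, 0 ≤ a k) (ha1 : a 1 ≤ 1)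
    (hak : ∀ k, 2 ≤ k → a k ≤ 1 - (a 1) ^ 2)
    (r : ℝ) (hr : r ∈ Set.Ioo (0 : ℝ) 1)
    (hR : 2 * r ≤ 3 * (1 - r) * Real.log (1 / (1 - r))) :
    ∑' k : ℕ, r ^ (k + 1) * ((1 / (k + 1 : ℝ)) *
        ∑ n ∈ Finset.range (k + 1), a (n + 1))
      ≤ Real.log (1 / (1 - r)) :=
  cesaro_bohr_normalized_general a ha1 hak r hr hR
end

section
/- Let m ≥ 0 be an integer, γ > −m a real number, and let (a_k)_{k≥m} be a sequence of nonnegative real numbers with a_m ≤ 1 and a_k ≤ 1 − a_m² for all k ≥ m+1. Then for every r ∈ (0,1) satisfying r^m/(m+γ) ≥ 2·Σ_{k=m+1}^∞ r^k/(k+γ), one has Σ_{k=m}^∞ (a_k/(k+γ))·r^k ≤ r^m/(m+γ). -/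
open Real Finset

/-- Bohr-type inequality for the Bernardi operator (real coefficient form of
Theorem 2.2). -/
theorem bernardi_bohr (m : ℕ) (γ : ℝ) (hγ : -(m : ℝ) < γ)
    (a : ℕ → ℝ) (ha : ∀ k, 0 ≤ a k) (ham : a m ≤ 1)
    (hak : ∀ k, m + 1 ≤ k → a k ≤ 1 - (a m) ^ 2)
    (r : ℝ) (hr : r ∈ Set.Ioo (0 : ℝ) 1)
    (hR : 2 * ∑' k : ℕ, r ^ (m + 1 + k) / (((m + 1 + k : ℕ) : ℝ) + γ)
        ≤ r ^ m / ((m : ℝ) + γ)) :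
    ∑' k : ℕ, a (m + k) / (((m + k : ℕ) : ℝ) + γ) * r ^ (m + k)
      ≤ r ^ m / ((m : ℝ) + γ) := by
  obtain ⟨hr0, hr1⟩ := hr
  have hmγ : 0 < (m : ℝ) + γ := by linarith
  have hden : ∀ k : ℕ, 0 < ((m + k : ℕ) : ℝ) + γ := by
    intro k
    push_cast
    have : (0:ℝ) ≤ k := Nat.cast_nonneg k
    linarith
  have hdge : ∀ k : ℕ, (m : ℝ) + γ ≤ ((m + k : ℕ) : ℝ) + γ := by
    intro k
    push_cast
    have : (0:ℝ) ≤ k := Nat.cast_nonneg k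
    linarith
  set f : ℕ → ℝ := fun k => a (m + k) / (((m + k : ℕ) : ℝ) + γ) * r ^ (m + k) with hf
  set g : ℕ → ℝ := fun k => r ^ (m + 1 + k) / (((m + 1 + k : ℕ) : ℝ) + γ) with hg
  have hale : ∀ k, a (m + k) ≤ 1 := by
    intro k
    cases k with
    | zero => simpa using ham
    | succ j =>
      have h := hak (m + (j+1)) (by omega)
      nlinarith [sq_nonneg (a m), ha m]
  have hfnn : ∀ k, 0 ≤ f k := fun k =>
    mul_nonneg (div_nonneg (ha _) (hden k).le) (by positivity)
  have hfle : ∀ k, f k ≤ r ^ (m + k) / ((m : ℝ) + γ) := by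
    intro k
    have h1 : a (m + k) / (((m + k : ℕ) : ℝ) + γ) ≤ 1 / ((m : ℝ) + γ) :=
      div_le_div₀ (by norm_num) (hale k) hmγ (hdge k)
    calc f k ≤ (1 / ((m : ℝ) + γ)) * r ^ (m + k) :=
          mul_le_mul_of_nonneg_right h1 (by positivity)
      _ = r ^ (m + k) / ((m : ℝ) + γ) := by ring
  have hgeom : Summable (fun k : ℕ => r ^ (m + k) / ((m : ℝ) + γ)) := by
    have h := summable_geometric_of_lt_one hr0.le hr1
    have := (h.mul_left (r ^ m / ((m : ℝ) + γ)))
    refine this.congr fun k => ?_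
    rw [pow_add]; ring
  have hfs : Summable f := Summable.of_nonneg_of_le hfnn hfle hgeom
  have hgnn : ∀ k, 0 ≤ g k := by
    intro k
    have := hden (1 + k)
    rw [show m + (1 + k) = m + 1 + k by ring] at this
    exact div_nonneg (by positivity) this.le
  have hgle : ∀ k, g k ≤ r ^ (m + (1 + k)) / ((m : ℝ) + γ) := by
    intro k
    have hgk : g k = r ^ (m + (1+k)) / (((m + (1+k) : ℕ) : ℝ) + γ) := by
      simp only [hg, show m + 1 + k = m + (1 + k) by ring]
    rw [hgk]
    exact div_le_div_of_nonneg_left (by positivity) hmγ (hdge (1+k))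
  have hgs : Summable g :=
    Summable.of_nonneg_of_le hgnn hgle
      (hgeom.comp_injective (add_right_injective 1))
  set T := ∑' k, g k with hT
  have hTnn : 0 ≤ T := tsum_nonneg hgnn
  set C := r ^ m / ((m : ℝ) + γ) with hC
  have hCnn : 0 ≤ C := by positivity
  have hsplit : ∑' k, f k = f 0 + ∑' k, f (k + 1) := Summable.tsum_eq_zero_add hfs
  have hf0 : f 0 = a m * C := by
    simp only [hf, hC]
    norm_num
    ring
  have htail : ∑' k, f (k + 1) ≤ (1 - (a m) ^ 2) * T := by
    have hterm : ∀ k, f (k + 1) ≤ (1 - (a m) ^ 2) * g k := by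
      intro k
      have heq : f (k + 1) = a (m + 1 + k) * g k := by
        simp only [hf, hg, show m + (k + 1) = m + 1 + k by ring]
        ring
      rw [heq]
      exact mul_le_mul_of_nonneg_right
        (by simpa [show m + 1 + k = m + (1 + k) by ring] using
          hak (m + 1 + k) (by omega)) (hgnn k)
    calc ∑' k, f (k + 1) ≤ ∑' k, (1 - (a m) ^ 2) * g k :=
          Summable.tsum_le_tsum hterm (by
            exact (summable_nat_add_iff 1).mpr hfs) (hgs.mul_left _)
      _ = (1 - (a m) ^ 2) * T := tsum_mul_left
  have h2T : 2 * T ≤ C := hR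
  have hsq : 0 ≤ 1 - (a m) ^ 2 := by nlinarith [ha m]
  calc ∑' k, f k = f 0 + ∑' k, f (k + 1) := hsplit
    _ ≤ a m * C + (1 - (a m) ^ 2) * T := by rw [hf0]; linarith [htail]
    _ ≤ C := by nlinarith [mul_nonneg hCnn (sq_nonneg (1 - a m)),
        mul_nonneg hsq (by linarith : (0:ℝ) ≤ C - 2 * T)]
end

section
/- Let m ≥ 0 be an integer, γ > −m a real number, and let r ∈ (0,1) satisfy r^m/(m+γ) < 2·Σ_{k=m+1}^∞ r^k/(k+γ). Then there exists p ∈ (0,1) such that the sequence defined by a_m = p and a_k = (1−p²)p^{k−m−1} for k ≥ m+1 satisfies Σ_{k=m}^∞ (a_k/(k+γ))·r^k > r^m/(m+γ). -/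
open Real Finset

/-- Sharpness of the Bohr-type inequality for the Bernardi operator
(sharpness part of Theorem 2.2). -/
theorem bernardi_bohr_sharp (m : ℕ) (γ : ℝ) (hγ : -(m : ℝ) < γ)
    (r : ℝ) (hr : r ∈ Set.Ioo (0 : ℝ) 1)
    (hR : r ^ m / ((m : ℝ) + γ)
        < 2 * ∑' k : ℕ, r ^ (m + 1 + k) / (((m + 1 + k : ℕ) : ℝ) + γ)) :
    ∃ p ∈ Set.Ioo (0 : ℝ) 1,
      r ^ m / ((m : ℝ) + γ) <
        ∑' j : ℕ, (if j = 0 then p else (1 - p ^ 2) * p ^ (j - 1)) /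
            (((m + j : ℕ) : ℝ) + γ) * r ^ (m + j) := by
  obtain ⟨hr0, hr1⟩ := hr
  have hmγ : (0:ℝ) < (m:ℝ) + γ := by linarith
  set A := r ^ m / ((m:ℝ) + γ) with hAdef
  have hApos : 0 < A := div_pos (pow_pos hr0 m) hmγ
  have hden : ∀ k : ℕ, (0:ℝ) < ((m + k : ℕ) : ℝ) + γ := by
    intro k
    have : (0:ℝ) ≤ (k:ℝ) := Nat.cast_nonneg k
    push_cast; linarith
  have hden1 : ∀ k : ℕ, (0:ℝ) < ((m + 1 + k : ℕ) : ℝ) + γ := by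
    intro k
    have : (0:ℝ) ≤ (k:ℝ) := Nat.cast_nonneg k
    push_cast; linarith
  -- summability of T terms
  have hTsum : Summable (fun k : ℕ => r ^ (m + 1 + k) / (((m + 1 + k : ℕ) : ℝ) + γ)) := by
    apply Summable.of_nonneg_of_le (fun k => div_nonneg (by positivity) (hden1 k).le)
      (fun k => ?_) ((summable_geometric_of_lt_one hr0.le hr1).mul_left (1/((m:ℝ)+1+γ)))
    have h1 : r ^ (m + 1 + k) ≤ r ^ k :=
      pow_le_pow_of_le_one hr0.le hr1.le (by omega)
    have h2 : (m:ℝ) + 1 + γ ≤ ((m + 1 + k : ℕ) : ℝ) + γ := by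
      have : (0:ℝ) ≤ (k:ℝ) := Nat.cast_nonneg k
      push_cast; linarith
    have h3 : (0:ℝ) < (m:ℝ) + 1 + γ := by linarith
    calc r ^ (m + 1 + k) / (((m + 1 + k : ℕ) : ℝ) + γ)
        ≤ r ^ k / ((m:ℝ) + 1 + γ) :=
          div_le_div₀ (by positivity) h1 h3 h2
      _ = 1/((m:ℝ)+1+γ) * r ^ k := by ring
  -- partial sums
  obtain ⟨K, hK⟩ : ∃ K : ℕ, A / 2 < ∑ k ∈ range K, r ^ (m + 1 + k) / (((m + 1 + k : ℕ) : ℝ) + γ) := by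
    have hT := hTsum.hasSum.tendsto_sum_nat
    have hlt : A / 2 < ∑' k : ℕ, r ^ (m + 1 + k) / (((m + 1 + k : ℕ) : ℝ) + γ) := by linarith
    exact (hT.eventually (eventually_gt_nhds hlt)).exists
  set P := ∑ k ∈ range K, r ^ (m + 1 + k) / (((m + 1 + k : ℕ) : ℝ) + γ) with hPdef
  have hPpos : 0 < P := by linarith
  -- choose p close to 1
  have hg : Filter.Tendsto (fun p : ℝ => (1+p) * p^K * P) (nhdsWithin 1 (Set.Iio 1)) (nhds (2*P)) := by
    have hc : Continuous (fun p : ℝ => (1+p) * p^K * P) := by continuity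
    have h2 : (2:ℝ) * P = (1+(1:ℝ)) * (1:ℝ)^K * P := by norm_num
    rw [h2]
    exact (hc.tendsto 1).mono_left nhdsWithin_le_nhds
  have hA2P : A < 2 * P := by linarith
  have h1 : ∀ᶠ p in nhdsWithin (1:ℝ) (Set.Iio 1), A < (1+p)*p^K*P :=
    hg.eventually (eventually_gt_nhds hA2P)
  have h2 : ∀ᶠ p in nhdsWithin (1:ℝ) (Set.Iio 1), p ∈ Set.Ioo (0:ℝ) 1 := by
    have ha : ∀ᶠ p in nhdsWithin (1:ℝ) (Set.Iio 1), (0:ℝ) < p :=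
      (eventually_gt_nhds (by norm_num : (0:ℝ) < 1)).filter_mono nhdsWithin_le_nhds
    have hb : ∀ᶠ p in nhdsWithin (1:ℝ) (Set.Iio 1), p < 1 :=
      eventually_mem_nhdsWithin
    filter_upwards [ha, hb] with p hp1 hp2
    exact ⟨hp1, hp2⟩
  obtain ⟨p, hpA, hp0, hp1⟩ := (h1.and h2).exists
  refine ⟨p, ⟨hp0, hp1⟩, ?_⟩
  have hp2 : 0 < 1 - p^2 := by nlinarith
  -- summability of S
  have hSsum : Summable (fun j : ℕ => p ^ j * (r ^ (m + 1 + j) / (((m + 1 + j : ℕ) : ℝ) + γ))) := by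
    apply Summable.of_nonneg_of_le
      (fun j => mul_nonneg (by positivity) (div_nonneg (by positivity) (hden1 j).le))
      (fun j => ?_) hTsum
    have := hden1 j
    have hpj : p ^ j ≤ 1 := pow_le_one₀ hp0.le hp1.le
    have hterm : 0 ≤ r ^ (m + 1 + j) / (((m + 1 + j : ℕ) : ℝ) + γ) := by positivity
    nlinarith
  set S := ∑' j : ℕ, p ^ j * (r ^ (m + 1 + j) / (((m + 1 + j : ℕ) : ℝ) + γ)) with hSdef
  -- summability of main series
  set f : ℕ → ℝ := fun j => (if j = 0 then p else (1 - p ^ 2) * p ^ (j - 1)) /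
      (((m + j : ℕ) : ℝ) + γ) * r ^ (m + j) with hfdef
  have hfnonneg : ∀ j, 0 ≤ f j := by
    intro j
    have := hden j
    rcases Nat.eq_zero_or_pos j with h | h
    · simp [hfdef, h]; positivity
    · have : f j = (1 - p ^ 2) * p ^ (j - 1) / (((m + j : ℕ) : ℝ) + γ) * r ^ (m + j) := by
        simp [hfdef, Nat.pos_iff_ne_zero.mp h]
      rw [this]
      exact mul_nonneg (div_nonneg (by positivity) (hden j).le) (by positivity)
  have hfsum : Summable f := by
    apply Summable.of_nonneg_of_le hfnonneg (fun j => ?_)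
      ((summable_geometric_of_lt_one hr0.le hr1).mul_left (1/((m:ℝ)+γ)))
    have hd := hden j
    have hcoef : (if j = 0 then p else (1 - p ^ 2) * p ^ (j - 1)) ≤ 1 := by
      rcases Nat.eq_zero_or_pos j with h | h
      · simp [h]; linarith
      · simp [Nat.pos_iff_ne_zero.mp h]
        have hpj : p ^ (j-1) ≤ 1 := pow_le_one₀ hp0.le hp1.le
        nlinarith
    have hcoef0 : 0 ≤ (if j = 0 then p else (1 - p ^ 2) * p ^ (j - 1)) := by
      rcases Nat.eq_zero_or_pos j with h | h
      · simp [h]; linarith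
      · simp [Nat.pos_iff_ne_zero.mp h]; positivity
    have h1 : r ^ (m + j) ≤ r ^ j := pow_le_pow_of_le_one hr0.le hr1.le (by omega)
    have h2 : (m:ℝ) + γ ≤ ((m + j : ℕ) : ℝ) + γ := by
      have : (0:ℝ) ≤ (j:ℝ) := Nat.cast_nonneg j
      push_cast; linarith
    calc f j = (if j = 0 then p else (1 - p ^ 2) * p ^ (j - 1)) /
          (((m + j : ℕ) : ℝ) + γ) * r ^ (m + j) := rfl
      _ ≤ 1 / ((m:ℝ) + γ) * r ^ j :=
          mul_le_mul (div_le_div₀ zero_le_one hcoef hmγ h2) h1 (by positivity) (by positivity)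
  -- split off the first term
  have hsplit : ∑' j : ℕ, f j = f 0 + ∑' j : ℕ, f (j + 1) := Summable.tsum_eq_zero_add hfsum
  have hf0 : f 0 = p * A := by
    simp [hfdef, hAdef]
    ring
  have hfs : (fun j : ℕ => f (j + 1)) =
      fun j : ℕ => (1 - p ^ 2) * (p ^ j * (r ^ (m + 1 + j) / (((m + 1 + j : ℕ) : ℝ) + γ))) := by
    funext j
    have hmj : m + (j + 1) = m + 1 + j := by omega
    show (if j + 1 = 0 then p else (1 - p ^ 2) * p ^ (j + 1 - 1)) /
        (((m + (j + 1) : ℕ) : ℝ) + γ) * r ^ (m + (j + 1)) = _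
    rw [if_neg (Nat.succ_ne_zero j), Nat.add_sub_cancel, hmj]
    ring
  have htail : ∑' j : ℕ, f (j + 1) = (1 - p ^ 2) * S := by
    rw [hfs, hSdef, tsum_mul_left]
  -- lower bound for S
  have hSge : p ^ K * P ≤ S := by
    have h1 : ∑ k ∈ range K, p ^ K * (r ^ (m + 1 + k) / (((m + 1 + k : ℕ) : ℝ) + γ)) ≤
        ∑ k ∈ range K, p ^ k * (r ^ (m + 1 + k) / (((m + 1 + k : ℕ) : ℝ) + γ)) := by
      apply Finset.sum_le_sum
      intro k hk
      have hkK : k ≤ K := (Finset.mem_range.mp hk).le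
      have := hden1 k
      exact mul_le_mul_of_nonneg_right (pow_le_pow_of_le_one hp0.le hp1.le hkK) (by positivity)
    have h2 : ∑ k ∈ range K, p ^ k * (r ^ (m + 1 + k) / (((m + 1 + k : ℕ) : ℝ) + γ)) ≤ S :=
      Summable.sum_le_tsum (range K) (fun k _ => by have := hden1 k; positivity) hSsum
    calc p ^ K * P = ∑ k ∈ range K, p ^ K * (r ^ (m + 1 + k) / (((m + 1 + k : ℕ) : ℝ) + γ)) := by
          rw [hPdef, Finset.mul_sum]
      _ ≤ S := h1.trans h2
  show A < ∑' j : ℕ, f j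
  rw [hsplit, hf0, htail]
  have key : (1 - p) * A < (1 - p ^ 2) * (p ^ K * P) := by
    have h3 : (1 - p) * A < (1 - p) * ((1 + p) * p ^ K * P) :=
      mul_lt_mul_of_pos_left hpA (by linarith)
    nlinarith
  nlinarith [mul_le_mul_of_nonneg_left hSge hp2.le]
end

section
/- Let (a_k)_{k≥0} be a sequence of nonnegative real numbers with a_0 ≤ 1 and a_k ≤ 1 − a_0² for all k ≥ 1. Then for every r with 0 ≤ r ≤ 1/3, one has Σ_{n=0}^∞ r^n · (Σ_{k=0}^n a_k) ≤ 1/(1−r). -/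
open Real Finset

/-- Bohr-type inequality for the discrete Fourier transform
(real coefficient form of Theorem 2.3). -/
theorem fourier_bohr (a : ℕ → ℝ) (ha : ∀ k, 0 ≤ a k) (ha0 : a 0 ≤ 1)
    (hak : ∀ k, 1 ≤ k → a k ≤ 1 - (a 0) ^ 2)
    (r : ℝ) (hr0 : 0 ≤ r) (hr : r ≤ 1 / 3) :
    ∑' n : ℕ, r ^ n * ∑ k ∈ Finset.range (n + 1), a k ≤ 1 / (1 - r) := by
  set p := a 0 with hp
  have hq : 0 ≤ 1 - p ^ 2 := le_trans (ha 1) (hak 1 le_rfl)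
  have hp0 : 0 ≤ p := ha 0
  have hrlt : r < 1 := lt_of_le_of_lt hr (by norm_num)
  have hnorm : ‖r‖ < 1 := by rwa [Real.norm_eq_abs, abs_of_nonneg hr0]
  have hr1 : 0 < 1 - r := by linarith
  -- bound on partial sums
  have hsum : ∀ n : ℕ, ∑ k ∈ Finset.range (n + 1), a k ≤ p + n * (1 - p ^ 2) := by
    intro n
    induction n with
    | zero => simp [hp]
    | succ m ih =>
      rw [Finset.sum_range_succ]
      have := hak (m + 1) (by omega)
      push_cast
      push_cast at ih
      linarith
  have hfnonneg : ∀ n : ℕ, 0 ≤ r ^ n * ∑ k ∈ Finset.range (n + 1), a k := by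
    intro n
    exact mul_nonneg (pow_nonneg hr0 n) (Finset.sum_nonneg fun k _ => ha k)
  have hfle : ∀ n : ℕ, r ^ n * ∑ k ∈ Finset.range (n + 1), a k ≤
      p * r ^ n + (1 - p ^ 2) * (n * r ^ n) := by
    intro n
    have h1 : r ^ n * ∑ k ∈ Finset.range (n + 1), a k ≤ r ^ n * (p + n * (1 - p ^ 2)) :=
      mul_le_mul_of_nonneg_left (hsum n) (pow_nonneg hr0 n)
    calc r ^ n * ∑ k ∈ Finset.range (n + 1), a k ≤ r ^ n * (p + n * (1 - p ^ 2)) := h1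
      _ = p * r ^ n + (1 - p ^ 2) * (n * r ^ n) := by ring
  -- summability of the majorant
  have hg1 : Summable (fun n : ℕ => p * r ^ n) := (summable_geometric_of_lt_one hr0 hrlt).mul_left p
  have hg2 : Summable (fun n : ℕ => (1 - p ^ 2) * ((n : ℝ) * r ^ n)) :=
    ((summable_pow_mul_geometric_of_norm_lt_one 1 hnorm).congr (fun n => by
      simp)).mul_left _
  have hg : Summable (fun n : ℕ => p * r ^ n + (1 - p ^ 2) * ((n : ℝ) * r ^ n)) := hg1.add hg2
  have hf : Summable (fun n : ℕ => r ^ n * ∑ k ∈ Finset.range (n + 1), a k) :=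
    Summable.of_nonneg_of_le hfnonneg hfle hg
  have hle : ∑' n : ℕ, r ^ n * ∑ k ∈ Finset.range (n + 1), a k ≤
      ∑' n : ℕ, (p * r ^ n + (1 - p ^ 2) * ((n : ℝ) * r ^ n)) :=
    Summable.tsum_le_tsum hfle hf hg
  have hgeo : ∑' n : ℕ, r ^ n = (1 - r)⁻¹ := tsum_geometric_of_lt_one hr0 hrlt
  have hngeo : ∑' n : ℕ, (n : ℝ) * r ^ n = r / (1 - r) ^ 2 :=
    tsum_coe_mul_geometric_of_norm_lt_one hnorm
  have hval : ∑' n : ℕ, (p * r ^ n + (1 - p ^ 2) * ((n : ℝ) * r ^ n)) =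
      p * (1 - r)⁻¹ + (1 - p ^ 2) * (r / (1 - r) ^ 2) := by
    rw [Summable.tsum_add hg1 hg2, tsum_mul_left, tsum_mul_left, hgeo, hngeo]
  rw [hval] at hle
  refine le_trans hle ?_
  have h2 : (0:ℝ) < (1 - r) ^ 2 := by positivity
  rw [← sub_nonneg]
  have heq : 1 / (1 - r) - (p * (1 - r)⁻¹ + (1 - p ^ 2) * (r / (1 - r) ^ 2)) =
      ((1 - p) * (1 - 2 * r - p * r)) / (1 - r) ^ 2 := by
    field_simp
    ring
  rw [heq]
  apply div_nonneg _ (le_of_lt h2)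
  have h3 : 0 ≤ 1 - 2 * r - p * r := by nlinarith
  nlinarith
end

section
/- For every r with 1/3 < r < 1 there exists p ∈ (0,1) such that the sequence defined by a_0 = p and a_k = (1−p²)p^{k−1} for k ≥ 1 satisfies Σ_{n=0}^∞ r^n · (Σ_{k=0}^n a_k) > 1/(1−r). Equivalently, p/(1−r) + (1+p)·(r/(1−r) − pr/(1−pr)) > 1/(1−r) for p sufficiently close to 1. -/
open Real Finset

/-- Sharpness of the Bohr-type inequality for the discrete Fourier transform
(sharpness part of Theorem 2.3): the constant 1/3 cannot be improved. -/
theorem fourier_bohr_sharp (r : ℝ) (hr13 : 1 / 3 < r) (hr1 : r < 1) :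
    ∃ p ∈ Set.Ioo (0 : ℝ) 1,
      1 / (1 - r) <
        ∑' n : ℕ, r ^ n * ∑ k ∈ Finset.range (n + 1),
          (if k = 0 then p else (1 - p ^ 2) * p ^ (k - 1)) := by
  have hr0 : 0 < r := by linarith
  set p : ℝ := (1 + r) / (4 * r) with hp
  have hp0 : 0 < p := by positivity
  have hp1 : p < 1 := by
    rw [hp, div_lt_one (by linarith)]; linarith
  refine ⟨p, ⟨hp0, hp1⟩, ?_⟩
  have hpr : p * r < 1 := by nlinarith
  have hpr0 : 0 ≤ p * r := by positivity
  have key : ∀ n : ℕ, r ^ n * ∑ k ∈ Finset.range (n + 1),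
      (if k = 0 then p else (1 - p ^ 2) * p ^ (k - 1))
      = (1 + 2 * p) * r ^ n - (1 + p) * (p * r) ^ n := by
    intro n
    have hsum : ∀ m : ℕ, ∑ k ∈ Finset.range (m + 1),
        (if k = 0 then p else (1 - p ^ 2) * p ^ (k - 1))
        = (1 + 2 * p) - (1 + p) * p ^ m := by
      intro m
      induction m with
      | zero => simp; ring
      | succ n ih =>
        rw [Finset.sum_range_succ, ih]
        simp only [Nat.succ_ne_zero, if_false, Nat.succ_sub_one]
        ring
    rw [hsum, mul_pow]; ring
  rw [tsum_congr key]
  have h1 : Summable (fun n : ℕ => (1 + 2 * p) * r ^ n) :=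
    (summable_geometric_of_lt_one hr0.le hr1).mul_left _
  have h2 : Summable (fun n : ℕ => (1 + p) * (p * r) ^ n) :=
    (summable_geometric_of_lt_one hpr0 hpr).mul_left _
  rw [Summable.tsum_sub h1 h2, tsum_mul_left, tsum_mul_left,
    tsum_geometric_of_lt_one hr0.le hr1, tsum_geometric_of_lt_one hpr0 hpr]
  have hr1' : 0 < 1 - r := by linarith
  have hpr1' : 0 < 1 - p * r := by linarith
  rw [div_lt_iff₀ hr1']
  have ha : (1 - r) * (1 - r)⁻¹ = 1 := mul_inv_cancel₀ hr1'.ne'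
  have hb : (1 - p * r) * (1 - p * r)⁻¹ = 1 := mul_inv_cancel₀ hpr1'.ne'
  have hbpos : 0 < (1 - p * r)⁻¹ := inv_pos.2 hpr1'
  have hdiff : 2 * p * (1 - p * r) - (1 + p) * (1 - r) = (3 * r - 1) ^ 2 / (8 * r) := by
    rw [hp]; field_simp; ring
  have hkey : (1 + p) * (1 - r) < 2 * p * (1 - p * r) := by
    have h3 : 0 < (3 * r - 1) ^ 2 / (8 * r) := by
      apply div_pos (pow_pos (by linarith) 2) (by linarith)
    linarith
  nlinarith [mul_lt_mul_of_pos_right hkey hbpos]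
end

section
/- Let (a_k)_{k≥0} be a sequence of nonnegative real numbers with a_0 ≤ 1 and a_k ≤ 1 − a_0² for all k ≥ 1. Then for every r with 0 < r < 1, one has Σ_{n=0}^∞ r^n · (Σ_{k=0}^n a_k/(n+1)^{k+1}) ≤ (1/r)·log(1/(1−r)). -/
/-!
With `q = 1/(n+1)`, the `n`-th coefficient of the majorant series is
`a₀ q + ∑_{1 ≤ k ≤ n} a_k q^{k+1} ≤ a₀ q + (1 - a₀²) q T` where `T = ∑_{1 ≤ k ≤ n} q^k = (1 - q^n)/n ≤ 1/2`.
As `a₀ + (1 - a₀²) T ≤ 1` whenever `a₀ ≤ 1` and `0 ≤ T ≤ 1/2`, the coefficient is at most `q`, and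
`∑ rⁿ/(n+1) = (1/r) log (1/(1-r))` is the logarithm series.
-/

open Real Finset

theorem sum_range_inv_succ_pow_succ_le_half (n : ℕ) :
    ∑ k ∈ range n, ((n : ℝ) + 1)⁻¹ ^ (k + 1) ≤ 1 / 2 := by
  rcases lt_trichotomy n 1 with h | rfl | h
  · simp [Nat.lt_one_iff.mp h]
  · norm_num
  have hn : (2 : ℝ) ≤ n := by exact_mod_cast h
  have hn0 : (n : ℝ) ≠ 0 := by positivity
  set q : ℝ := ((n : ℝ) + 1)⁻¹ with hq
  have hq0 : 0 ≤ q := by positivity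
  have hq1 : q < 1 := inv_lt_one_of_one_lt₀ (by linarith)
  calc ∑ k ∈ range n, q ^ (k + 1) = q * ∑ k ∈ range n, q ^ k := by
        simp only [pow_succ', mul_sum]
    _ ≤ q * (q ^ 0 / (1 - q)) := by
        rw [range_eq_Ico]
        gcongr
        exact geom_sum_Ico_le_of_lt_one hq0 hq1
    _ = 1 / n := by
        rw [hq]
        field_simp [hn0]
        ring
    _ ≤ 1 / 2 := by gcongr

theorem sum_range_div_pow_succ_le_inv_succ (a : ℕ → ℝ) (ha0 : a 0 ≤ 1)
    (hak : ∀ k, 1 ≤ k → a k ≤ 1 - a 0 ^ 2) (n : ℕ) :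
    ∑ k ∈ range (n + 1), a k / ((n : ℝ) + 1) ^ (k + 1) ≤ ((n : ℝ) + 1)⁻¹ := by
  set q : ℝ := ((n : ℝ) + 1)⁻¹ with hq
  have hq0 : 0 ≤ q := by positivity
  set T := ∑ k ∈ range n, q ^ (k + 1)
  have hT0 : 0 ≤ T := by positivity
  have hT : T ≤ 1 / 2 := sum_range_inv_succ_pow_succ_le_half n
  have htail : ∑ k ∈ range n, a (k + 1) * q ^ (k + 1 + 1) ≤ (1 - a 0 ^ 2) * (q * T) := by
    rw [mul_sum, mul_sum]
    refine sum_le_sum fun k _ => ?_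
    rw [← pow_succ']
    exact mul_le_mul_of_nonneg_right (hak (k + 1) k.succ_pos) (by positivity)
  have hcoeff : ∀ k, a k / ((n : ℝ) + 1) ^ (k + 1) = a k * q ^ (k + 1) := fun k => by
    rw [hq, inv_pow, div_eq_mul_inv]
  simp only [hcoeff, sum_range_succ', zero_add, pow_one]
  -- `q - a₀ q - (1 - a₀²) q T = q (1 - a₀) (1 - 2T) + q (1 - a₀)² T`
  nlinarith [mul_nonneg (mul_nonneg hq0 (sub_nonneg.2 ha0)) (by linarith : (0 : ℝ) ≤ 1 - 2 * T),
    mul_nonneg hq0 (mul_nonneg (sq_nonneg (1 - a 0)) hT0)]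

theorem hasSum_pow_mul_inv_succ {r : ℝ} (hr0 : r ≠ 0) (hr : |r| < 1) :
    HasSum (fun n : ℕ => r ^ n * ((n : ℝ) + 1)⁻¹) (r⁻¹ * -log (1 - r)) := by
  refine ((hasSum_pow_div_log_of_abs_lt_one hr).mul_left r⁻¹).congr_fun fun n => ?_
  field_simp
  ring

/-- Bohr-type inequality for the discrete Laplace transform
(real coefficient form of Theorem 2.4). -/
theorem laplace_bohr (a : ℕ → ℝ) (ha : ∀ k, 0 ≤ a k) (ha0 : a 0 ≤ 1)
    (hak : ∀ k, 1 ≤ k → a k ≤ 1 - (a 0) ^ 2)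
    (r : ℝ) (hr : r ∈ Set.Ioo (0 : ℝ) 1) :
    ∑' n : ℕ, r ^ n * ∑ k ∈ Finset.range (n + 1), a k / ((n : ℝ) + 1) ^ (k + 1)
      ≤ (1 / r) * Real.log (1 / (1 - r)) := by
  obtain ⟨hr0, hr1⟩ := hr
  have hlog := hasSum_pow_mul_inv_succ hr0.ne' (by rwa [abs_of_pos hr0])
  have hle : ∀ n : ℕ, r ^ n * ∑ k ∈ range (n + 1), a k / ((n : ℝ) + 1) ^ (k + 1)
      ≤ r ^ n * ((n : ℝ) + 1)⁻¹ := fun n =>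
    mul_le_mul_of_nonneg_left (sum_range_div_pow_succ_le_inv_succ a ha0 hak n) (by positivity)
  have hnonneg : ∀ n : ℕ, 0 ≤ r ^ n * ∑ k ∈ range (n + 1), a k / ((n : ℝ) + 1) ^ (k + 1) :=
    fun n => mul_nonneg (by positivity) (sum_nonneg fun k _ => div_nonneg (ha k) (by positivity))
  rw [one_div, one_div, log_inv, ← hlog.tsum_eq]
  exact (hlog.summable.of_nonneg_of_le hnonneg hle).tsum_le_tsum hle hlog.summable
end

section
/- Fix r with 0 < r < 1, and for p ∈ (0,1) define the sequence a_0 = p, a_k = (1−p²)p^{k−1} for k ≥ 1, and S(p) = Σ_{n=0}^∞ r^n · (Σ_{k=0}^n a_k/(n+1)^{k+1}). Then S(p) → (1/r)·log(1/(1−r)) as p → 1⁻. In particular, for every ε > 0 there exists p ∈ (0,1) with S(p) > (1/r)·log(1/(1−r)) − ε. -/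
/-!
The series is dominated termwise by `rⁿ`: every coefficient has modulus at most `1`, so each of
the `n + 1` terms of the inner sum is at most `1/(n+1)`. As `p → 1` the coefficients tend to
`(1, 0, 0, …)`, so by dominated convergence the series tends to
`∑ rⁿ/(n+1) = (1/r) log (1/(1-r))`.
-/

open Real Finset Filter Topology

/-- The Laplace transform of `∑ a_k t^k / k!`, truncated at degree `n`, evaluated at `s = n + 1`. -/
noncomputable def laplaceCoeff (a : ℕ → ℝ) (n : ℕ) : ℝ :=
  ∑ k ∈ range (n + 1), a k / ((n : ℝ) + 1) ^ (k + 1)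

theorem abs_laplaceCoeff_le_one {a : ℕ → ℝ} (ha : ∀ k, |a k| ≤ 1) (n : ℕ) :
    |laplaceCoeff a n| ≤ 1 := by
  have hn : (1 : ℝ) ≤ (n : ℝ) + 1 := by linarith [n.cast_nonneg (α := ℝ)]
  have hterm : ∀ k, |a k / ((n : ℝ) + 1) ^ (k + 1)| ≤ 1 / ((n : ℝ) + 1) := fun k => by
    rw [abs_div, abs_of_pos (by positivity : (0 : ℝ) < ((n : ℝ) + 1) ^ (k + 1))]
    exact div_le_div₀ zero_le_one (ha k) (by positivity) (le_self_pow₀ hn k.succ_ne_zero)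
  calc |laplaceCoeff a n| ≤ ∑ k ∈ range (n + 1), |a k / ((n : ℝ) + 1) ^ (k + 1)| :=
        abs_sum_le_sum_abs _ _
    _ ≤ ∑ _k ∈ range (n + 1), 1 / ((n : ℝ) + 1) := sum_le_sum fun k _ => hterm k
    _ = 1 := by rw [sum_const, card_range, nsmul_eq_mul]; push_cast; field_simp

theorem laplaceCoeff_ite_eq_zero (c : ℝ) (n : ℕ) :
    laplaceCoeff (fun k => if k = 0 then c else 0) n = c / ((n : ℝ) + 1) := by
  simp only [laplaceCoeff, ite_div, zero_div, sum_ite_eq', mem_range, Nat.succ_pos, if_true,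
    zero_add, pow_one]

theorem tendsto_tsum_laplaceCoeff {α : Type*} {l : Filter α} {a : α → ℕ → ℝ} {b : ℕ → ℝ}
    {r : ℝ} (hr : |r| < 1) (ha : ∀ᶠ x in l, ∀ k, |a x k| ≤ 1)
    (hab : ∀ k, Tendsto (a · k) l (𝓝 (b k))) :
    Tendsto (fun x => ∑' n, r ^ n * laplaceCoeff (a x) n) l
      (𝓝 (∑' n, r ^ n * laplaceCoeff b n)) := by
  refine tendsto_tsum_of_dominated_convergence (bound := fun n => |r| ^ n)
    (summable_geometric_of_lt_one (abs_nonneg r) hr) (fun n => ?_) ?_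
  · exact ((tendsto_finsetSum _ fun k _ => (hab k).div_const _).const_mul _)
  · filter_upwards [ha] with x hx n
    rw [norm_mul, norm_pow, Real.norm_eq_abs, Real.norm_eq_abs]
    exact mul_le_of_le_one_right (by positivity) (abs_laplaceCoeff_le_one hx n)

theorem hasSum_pow_div_succ {r : ℝ} (hr0 : r ≠ 0) (hr : |r| < 1) :
    HasSum (fun n : ℕ => r ^ n / ((n : ℝ) + 1)) ((1 / r) * log (1 / (1 - r))) := by
  have hterm : (fun n : ℕ => r ^ n / ((n : ℝ) + 1)) =
      fun n : ℕ => 1 / r * (r ^ (n + 1) / (n + 1)) := by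
    funext n
    field_simp
    ring
  rw [one_div (1 - r), log_inv, hterm]
  exact (hasSum_pow_div_log_of_abs_lt_one hr).mul_left (1 / r)

/-- The coefficient moduli of the extremal function `f_p`. -/
noncomputable def bohrCoeff (p : ℝ) (k : ℕ) : ℝ :=
  if k = 0 then p else (1 - p ^ 2) * p ^ (k - 1)

theorem abs_bohrCoeff_le_one {p : ℝ} (hp : |p| ≤ 1) (k : ℕ) : |bohrCoeff p k| ≤ 1 := by
  unfold bohrCoeff
  split_ifs
  · exact hp
  · have hsq : p ^ 2 ≤ 1 := (sq_le_one_iff_abs_le_one p).mpr hp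
    rw [abs_mul, abs_of_nonneg (sub_nonneg.mpr hsq), abs_pow]
    exact mul_le_one₀ (by linarith [sq_nonneg p]) (by positivity) (pow_le_one₀ (abs_nonneg p) hp)

theorem tendsto_bohrCoeff_one (k : ℕ) :
    Tendsto (bohrCoeff · k) (𝓝 1) (𝓝 (if k = 0 then 1 else 0)) := by
  have hcont : Continuous (bohrCoeff · k) := by
    unfold bohrCoeff
    split_ifs <;> fun_prop
  convert hcont.tendsto 1 using 2
  unfold bohrCoeff
  split_ifs <;> norm_num

/-- Sharpness of the discrete Laplace transform bound (Theorem 2.4 /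
Corollary 2.3): the Laplace majorant series of the extremal functions tends to
the bound `(1/r) log (1/(1-r))` as `p → 1⁻`, so for every `ε > 0` some `p`
comes within `ε` of the bound. -/
theorem laplace_bohr_sharp (r : ℝ) (hr : r ∈ Set.Ioo (0 : ℝ) 1)
    (S : ℝ → ℝ)
    (hS : ∀ p, S p = ∑' n : ℕ, r ^ n *
        ∑ k ∈ Finset.range (n + 1),
          (if k = 0 then p else (1 - p ^ 2) * p ^ (k - 1)) /
            ((n : ℝ) + 1) ^ (k + 1)) :
    Filter.Tendsto S (nhdsWithin 1 (Set.Ioo (0 : ℝ) 1))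
        (nhds ((1 / r) * Real.log (1 / (1 - r)))) ∧
      ∀ ε > (0 : ℝ), ∃ p ∈ Set.Ioo (0 : ℝ) 1,
        (1 / r) * Real.log (1 / (1 - r)) - ε < S p := by
  have hr_abs : |r| < 1 := by rw [abs_of_pos hr.1]; exact hr.2
  have hS' : S = fun p => ∑' n, r ^ n * laplaceCoeff (bohrCoeff p) n := funext hS
  have hlim : ∑' n, r ^ n * laplaceCoeff (fun k => if k = 0 then 1 else 0) n
      = (1 / r) * log (1 / (1 - r)) := by
    simp only [laplaceCoeff_ite_eq_zero, ← div_eq_mul_one_div]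
    exact (hasSum_pow_div_succ hr.1.ne' hr_abs).tsum_eq
  have htend : Tendsto S (𝓝[Set.Ioo 0 1] 1) (𝓝 ((1 / r) * log (1 / (1 - r)))) := by
    rw [hS', ← hlim]
    refine tendsto_tsum_laplaceCoeff hr_abs ?_
      fun k => (tendsto_bohrCoeff_one k).mono_left nhdsWithin_le_nhds
    filter_upwards [self_mem_nhdsWithin] with p hp k
    exact abs_bohrCoeff_le_one (abs_le.mpr ⟨by linarith [hp.1], hp.2.le⟩) k
  refine ⟨htend, fun ε hε => ?_⟩
  have : (𝓝[Set.Ioo (0 : ℝ) 1] 1).NeBot := right_nhdsWithin_Ioo_neBot zero_lt_one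
  obtain ⟨p, hp, hlt⟩ :=
    ((htend.eventually (eventually_gt_nhds (sub_lt_self _ hε))).and self_mem_nhdsWithin).exists
  exact ⟨p, hlt, hp⟩
end

section
/- Let β > 0 with β ≠ 1 and let r ∈ (0,1) satisfy 3(1−(1−r)^{1−β})/(1−β) ≥ 2((1−r)^{−β} − 1)/β. Then for every p ∈ [0,1], (p²+p−1)·(1−(1−r)^{1−β})/(1−β) + (1−p²)·((1−r)^{−β} − 1)/β ≤ (1−(1−r)^{1−β})/(1−β). -/
open Real

/-- The core scalar inequality `Ψ(p) ≤ Ψ(1)` in the proof of Theorem 2.1. -/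
theorem cesaro_psi_ineq (β : ℝ) (hβ : 0 < β) (hβ1 : β ≠ 1)
    (r : ℝ) (hr : r ∈ Set.Ioo (0 : ℝ) 1)
    (hR : 2 * ((1 - r) ^ (-β) - 1) / β ≤ 3 * (1 - (1 - r) ^ (1 - β)) / (1 - β))
    (p : ℝ) (hp : p ∈ Set.Icc (0 : ℝ) 1) :
    (p ^ 2 + p - 1) * (1 - (1 - r) ^ (1 - β)) / (1 - β) +
        (1 - p ^ 2) * ((1 - r) ^ (-β) - 1) / β
      ≤ (1 - (1 - r) ^ (1 - β)) / (1 - β) := by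
  obtain ⟨hr0, hr1⟩ := hr
  obtain ⟨hp0, hp1⟩ := hp
  have hx0 : (0:ℝ) < 1 - r := by linarith
  have hx1 : 1 - r ≤ 1 := by linarith
  set A : ℝ := (1 - (1 - r) ^ (1 - β)) / (1 - β) with hA
  set B : ℝ := ((1 - r) ^ (-β) - 1) / β with hB
  have hBnn : 0 ≤ B := by
    have h1 : 1 ≤ (1 - r) ^ (-β) :=
      Real.one_le_rpow_of_pos_of_le_one_of_nonpos hx0 hx1 (by linarith)
    exact div_nonneg (by linarith) hβ.le
  have hAnn : 0 ≤ A := by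
    rcases lt_or_gt_of_ne hβ1 with h | h
    · have h1 : (1 - r) ^ (1 - β) ≤ 1 :=
        Real.rpow_le_one hx0.le hx1 (by linarith)
      exact div_nonneg (by linarith) (by linarith)
    · have h1 : 1 < (1 - r) ^ (1 - β) :=
        Real.one_lt_rpow_of_pos_of_lt_one_of_neg hx0 (by linarith) (by linarith)
      exact le_of_lt (div_pos_of_neg_of_neg (by linarith) (by linarith))
  have hR' : 2 * B ≤ 3 * A := by
    rw [hA, hB]
    calc 2 * (((1 - r) ^ (-β) - 1) / β) = 2 * ((1 - r) ^ (-β) - 1) / β := by ring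
    _ ≤ 3 * (1 - (1 - r) ^ (1 - β)) / (1 - β) := hR
    _ = 3 * ((1 - (1 - r) ^ (1 - β)) / (1 - β)) := by ring
  have hgoal : (p ^ 2 + p - 1) * A + (1 - p ^ 2) * B ≤ A := by
    nlinarith [mul_nonneg (sub_nonneg.2 hp1) hAnn,
      mul_nonneg (sub_nonneg.2 hp1) hBnn,
      mul_nonneg (sub_nonneg.2 hp1) (sub_nonneg.2 hR'),
      mul_nonneg (mul_nonneg (sub_nonneg.2 hp1) (sub_nonneg.2 hp1)) hAnn,
      mul_nonneg (mul_nonneg (sub_nonneg.2 hp1) hp0) hAnn,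
      mul_nonneg (mul_nonneg (sub_nonneg.2 hp1) hp0) (sub_nonneg.2 hR')]
  calc (p ^ 2 + p - 1) * (1 - (1 - r) ^ (1 - β)) / (1 - β) +
        (1 - p ^ 2) * ((1 - r) ^ (-β) - 1) / β
      = (p ^ 2 + p - 1) * A + (1 - p ^ 2) * B := by rw [hA, hB]; ring
    _ ≤ A := hgoal
end

section
/- For all real r with 0 ≤ r ≤ 1/3 and all p ∈ [0,1], one has p/(1−r) + (1−p²)·r/(1−r)² ≤ 1/(1−r). -/
/-- The core scalar inequality `G(p) ≤ G(1)` in the proof of Theorem 2.3. -/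
theorem fourier_G_ineq (r : ℝ) (hr0 : 0 ≤ r) (hr : r ≤ 1 / 3)
    (p : ℝ) (hp : p ∈ Set.Icc (0 : ℝ) 1) :
    p / (1 - r) + (1 - p ^ 2) * r / (1 - r) ^ 2 ≤ 1 / (1 - r) := by
  obtain ⟨hp0, hp1⟩ := hp
  have h1 : (0:ℝ) < 1 - r := by linarith
  have key : p * (1 - r) + (1 - p ^ 2) * r ≤ 1 - r := by
    nlinarith [mul_nonneg (sub_nonneg.2 hp1) (sub_nonneg.2 (by nlinarith : r * (2 + p) ≤ 1))]
  have : p / (1 - r) + (1 - p ^ 2) * r / (1 - r) ^ 2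
      = (p * (1 - r) + (1 - p ^ 2) * r) / (1 - r) ^ 2 := by
    field_simp
  rw [this]
  calc (p * (1 - r) + (1 - p ^ 2) * r) / (1 - r) ^ 2 ≤ (1 - r) / (1 - r) ^ 2 :=
        div_le_div_of_nonneg_right key (by positivity) |>.trans_eq rfl
    _ = 1 / (1 - r) := by field_simp
end

section
/- For every real r with 0 < r < 1, (3 − 2r)·log(1/(1−r)) > 2r. Equivalently, ((2r−3)/r)·log(1−r) − 2 > 0. -/
/-!
Substituting `x = r / (1 - r)` in the Padé-type bound `2x / (x + 2) ≤ log (1 + x)` gives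
`log (1 / (1 - r)) ≥ 2r / (2 - r)`, and `(3 - 2r) · 2r / (2 - r) > 2r` because `3 - 2r > 2 - r`.
-/

open Real

lemma two_mul_div_two_sub_le_log_one_div_one_sub {r : ℝ} (h0 : 0 ≤ r) (h1 : r < 1) :
    2 * r / (2 - r) ≤ log (1 / (1 - r)) := by
  have hpos : 0 < 1 - r := by linarith
  have htwo : 2 - r ≠ 0 := by linarith
  have key := le_log_one_add_of_nonneg (div_nonneg h0 hpos.le)
  have hlhs : 2 * (r / (1 - r)) / (r / (1 - r) + 2) = 2 * r / (2 - r) := by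
    field_simp
    ring
  have harg : 1 + r / (1 - r) = 1 / (1 - r) := by
    field_simp
    ring
  rwa [hlhs, harg] at key

lemma two_mul_lt_three_sub_mul_log_one_div_one_sub {r : ℝ} (h0 : 0 < r) (h1 : r < 1) :
    2 * r < (3 - 2 * r) * log (1 / (1 - r)) :=
  calc 2 * r < (3 - 2 * r) * (2 * r / (2 - r)) := by
        rw [mul_div_assoc', lt_div_iff₀ (by linarith)]
        nlinarith
    _ ≤ (3 - 2 * r) * log (1 / (1 - r)) := by
        gcongr
        · linarith
        · exact two_mul_div_two_sub_le_log_one_div_one_sub h0.le h1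

/-- The scalar inequality `Q'(1) > 0` in the proof of Theorem 2.4, in its two
equivalent forms. -/
theorem laplace_Q_deriv_pos (r : ℝ) (hr : r ∈ Set.Ioo (0 : ℝ) 1) :
    2 * r < (3 - 2 * r) * Real.log (1 / (1 - r)) ∧
      0 < ((2 * r - 3) / r) * Real.log (1 - r) - 2 := by
  obtain ⟨h0, h1⟩ := hr
  have hmain := two_mul_lt_three_sub_mul_log_one_div_one_sub h0 h1
  refine ⟨hmain, ?_⟩
  have hrewrite : (2 * r - 3) / r * log (1 - r) - 2 =
      ((3 - 2 * r) * log (1 / (1 - r)) - 2 * r) / r := by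
    rw [one_div, log_inv]
    field_simp
    ring
  rw [hrewrite]
  exact div_pos (by linarith) h0
end

section
/- For every real r with 0 < r < 1 and every p ∈ [0,1], ((1−r)(1−p²) − p)/r · log(1−r) + (1−p²) ≤ (1/r)·log(1/(1−r)). -/
open Real

/-- The scalar inequality `Q(p) ≤ Q(1)` in the proof of Theorem 2.4. -/
theorem laplace_Q_ineq (r : ℝ) (hr : r ∈ Set.Ioo (0 : ℝ) 1)
    (p : ℝ) (hp : p ∈ Set.Icc (0 : ℝ) 1) :
    ((1 - r) * (1 - p ^ 2) - p) / r * Real.log (1 - r) + (1 - p ^ 2)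
      ≤ (1 / r) * Real.log (1 / (1 - r)) := by
  obtain ⟨hr0, hr1⟩ := hr
  obtain ⟨hp0, hp1⟩ := hp
  have hx : (0:ℝ) < 1 - r := by linarith
  have hx1 : (1:ℝ) - r ≤ 1 := by linarith
  set q : ℝ := (1 - r) ^ ((4:ℝ)⁻¹) with hqdef
  have hq0 : 0 < q := Real.rpow_pos_of_pos hx _
  have hq4 : q ^ (4:ℕ) = 1 - r := by
    rw [hqdef, ← Real.rpow_natCast ((1-r) ^ ((4:ℝ)⁻¹)) 4, ← Real.rpow_mul hx.le]
    norm_num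
  have hq1 : q ≤ 1 := Real.rpow_le_one hx.le hx1 (by norm_num)
  have hlogq : Real.log q ≤ q - 1 := by
    have := Real.log_le_sub_one_of_pos hq0
    linarith
  have hlog : Real.log (1 - r) = 4 * Real.log q := by
    rw [← hq4, Real.log_pow]
    push_cast; ring
  have hL4 : 4 * (1 - q) ≤ -Real.log (1 - r) := by
    rw [hlog]; linarith
  have hL0 : 0 ≤ -Real.log (1 - r) := by
    have := Real.log_nonpos hx.le hx1
    linarith
  -- key: (3 - 2r) * (-log(1-r)) ≥ 2r
  have hkey : 2 * r ≤ (3 - 2*r) * (-Real.log (1 - r)) := by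
    have h32 : (0:ℝ) < 3 - 2*r := by linarith
    have step : (3 - 2*r) * (4 * (1 - q)) ≤ (3 - 2*r) * (-Real.log (1 - r)) :=
      mul_le_mul_of_nonneg_left hL4 h32.le
    have hr_eq : r = 1 - q ^ 4 := by
      have := hq4; push_cast at this ⊢; linarith
    have poly : 2 * r ≤ (3 - 2*r) * (4 * (1 - q)) := by
      rw [hr_eq]
      nlinarith [sq_nonneg (2*q^2 - 1), sq_nonneg (q - 1), sq_nonneg q,
        sq_nonneg (2*q^2 - q - 1), sq_nonneg (2*q^2 - q), hq0.le, hq1,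
        mul_nonneg (sub_nonneg.2 hq1) (sq_nonneg (2*q^2 - q - 1)),
        mul_nonneg (sub_nonneg.2 hq1) hq0.le]
    linarith
  -- linear-in-L consequence: L * (2 + p - r - r*p) ≥ r * (1 + p)
  have hkey2 : r * (1 + p) ≤ (-Real.log (1 - r)) * (2 + p - r - r*p) := by
    nlinarith [mul_nonneg hL0 (by linarith : (0:ℝ) ≤ 1 - p), hkey,
      mul_le_mul_of_nonneg_left hkey (by linarith : (0:ℝ) ≤ 1 + p)]
  have hkey3 : r * ((1 - p) * (1 + p)) ≤ (-Real.log (1 - r)) * ((1-p) * (2 + p - r - r*p)) := by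
    have := mul_le_mul_of_nonneg_left hkey2 (by linarith : (0:ℝ) ≤ 1 - p)
    nlinarith [this]
  have hlog1 : Real.log (1 / (1 - r)) = -Real.log (1 - r) := by
    rw [one_div, Real.log_inv]
  rw [hlog1]
  have goal' : ((1 - r) * (1 - p ^ 2) - p) * Real.log (1 - r) + r * (1 - p ^ 2)
      ≤ -Real.log (1 - r) := by
    nlinarith [hkey3]
  calc ((1 - r) * (1 - p ^ 2) - p) / r * Real.log (1 - r) + (1 - p ^ 2)
      = (((1 - r) * (1 - p ^ 2) - p) * Real.log (1 - r) + r * (1 - p ^ 2)) / r := by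
        field_simp
    _ ≤ (-Real.log (1 - r)) / r := by
        exact div_le_div_of_nonneg_right goal' hr0.le
    _ = 1 / r * (-Real.log (1 - r)) := by ring
end
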